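/- (Generalised Strategy Correspondence, part i) Let G be a MAGIIAN, j ≥ 1, and G^{jK} its j-iterated MKBSC expansion. Let R be an observable reachability objective in G and R^{jK} its j-iterated translation in G^{jK}. Let {α^{jK}_i}_{i∈Agt} be a profile of observation-based memoryless strategies in G^{jK}, and {A_i(α^{jK}_i)}_{i∈Agt} the corresponding profile of generalised induced transducers for G. If {A_i(α^{jK}_i)}_{i∈Agt} is winning for R in G and G^K fulfills the PDK condition, then {α^{jK}_i}_{i∈Agt} is winning for R^{jK} in G^{jK}. -/
import Mathlib


open Set

/-- A multi-agent game with imperfect information against Nature (MAGIIAN).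
`obs i l` is the observation block of agent `i` containing location `l`;
the axioms make the blocks of each agent a partition of the locations. -/
structure MAGIIAN (Agt Loc : Type) (Act : Agt → Type) where
  init : Loc
  trans : Loc → (∀ i, Act i) → Loc → Prop
  obs : Agt → Loc → Set Loc
  obs_mem : ∀ i l, l ∈ obs i l
  obs_eq : ∀ i l l', l' ∈ obs i l → obs i l' = obs i l

namespace MAGIIAN

variable {Agt Loc : Type} {Act : Agt → Type}

/-- `o` is an observation (block) of agent `i` in `G`. -/
def IsObs (G : MAGIIAN Agt Loc Act) (i : Agt) (o : Set Loc) : Prop :=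
  ∃ l, o = G.obs i l

/-- Transition relation `Δ_i` of the projection `G|_i`. -/
def projTrans (G : MAGIIAN Agt Loc Act) (i : Agt) (l : Loc) (a : Act i) (l' : Loc) : Prop :=
  ∃ σ : ∀ j, Act j, σ i = a ∧ G.trans l σ l'

/-- Transition relation `Δ^K_i` of the individual KBSC expansion `(G|_i)^K`. -/
def kTrans (G : MAGIIAN Agt Loc Act) (i : Agt) (s : Set Loc) (a : Act i) (s' : Set Loc) : Prop :=
  ∃ o : Set Loc, G.IsObs i o ∧ s' = {l' ∈ o | ∃ l ∈ s, G.projTrans i l a l'} ∧ s'.Nonempty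

/-- Pruned joint transition relation `Δ^K` of the MKBSC expansion `G^K`
(unrealisable transitions are removed). -/
def kTransJ (G : MAGIIAN Agt Loc Act) (s : Agt → Set Loc) (σ : ∀ i, Act i)
    (s' : Agt → Set Loc) : Prop :=
  (∀ i, G.kTrans i (s i) (σ i) (s' i)) ∧
    ∃ l ∈ (⋂ i, s i), ∃ l' ∈ (⋂ i, s' i), G.trans l σ l'

/-- The MKBSC expansion `G^K`, as a MAGIIAN over joint knowledge states;
agent `i`'s observation of a joint knowledge state is determined by its `i`-th component. -/
def expand (G : MAGIIAN Agt Loc Act) : MAGIIAN Agt (Agt → Set Loc) Act where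
  init := fun _ => {G.init}
  trans := G.kTransJ
  obs := fun i s => {s' | s' i = s i}
  obs_mem := fun _ _ => rfl
  obs_eq := by
    intro i s s' h
    simp only [Set.mem_setOf_eq] at h
    ext t
    simp [Set.mem_setOf_eq, h]

/-- Reachability from the initial location. -/
def Reachable (G : MAGIIAN Agt Loc Act) (l : Loc) : Prop :=
  Relation.ReflTransGen (fun x y => ∃ σ, G.trans x σ y) G.init l

/-- The MKBSC expansion `G^K` fulfills the perfect-distributed-knowledge (PDK) condition:
every reachable joint knowledge state has singleton component intersection. -/
def PDK (G : MAGIIAN Agt Loc Act) : Prop :=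
  ∀ s : Agt → Set Loc, G.expand.Reachable s → ∃ l : Loc, (⋂ i, s i) = {l}

/-- A full play, given as its sequences of locations and of joint actions. -/
def IsPlay (G : MAGIIAN Agt Loc Act) (l : ℕ → Loc) (σ : ℕ → ∀ i, Act i) : Prop :=
  l 0 = G.init ∧ ∀ k, G.trans (l k) (σ k) (l (k + 1))

/-- Observation history of agent `i` (list of observation blocks) up to time `k`. -/
def obsHist (G : MAGIIAN Agt Loc Act) (i : Agt) (l : ℕ → Loc) (k : ℕ) : List (Set Loc) :=
  (List.range (k + 1)).map fun j => G.obs i (l j)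

/-- Outcomes (location sequences) of a profile of observation-based
perfect-recall strategies. -/
def PROutcome (G : MAGIIAN Agt Loc Act) (α : ∀ i, List (Set Loc) → Act i)
    (l : ℕ → Loc) : Prop :=
  ∃ σ : ℕ → ∀ i, Act i, G.IsPlay l σ ∧ ∀ k i, σ k i = α i (G.obsHist i l k)

/-- Outcomes of a profile of observation-based memoryless strategies. -/
def MLOutcome (G : MAGIIAN Agt Loc Act) (α : ∀ i, Set Loc → Act i) (l : ℕ → Loc) : Prop :=
  ∃ σ : ℕ → ∀ i, Act i, G.IsPlay l σ ∧ ∀ k i, σ k i = α i (G.obs i (l k))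

/-- A play is winning for an observable reachability objective `R` iff some
agent at some point observes an observation in `R`. -/
def WinsReach (G : MAGIIAN Agt Loc Act) (R : Set (Set Loc)) (l : ℕ → Loc) : Prop :=
  ∃ i k, G.obs i (l k) ∈ R

/-- A play is winning for an observable safety objective `F` iff at every point
some agent observes an observation in `F`. -/
def WinsSafe (G : MAGIIAN Agt Loc Act) (F : Set (Set Loc)) (l : ℕ → Loc) : Prop :=
  ∀ k, ∃ i, G.obs i (l k) ∈ F

/-- `ob_i`: maps an observation block of `G^K` for agent `i` (all of whose members have the
same `i`-th component `A`) to the unique observation of `i` in `G` that includes `A`. -/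
def obMap (G : MAGIIAN Agt Loc Act) (i : Agt) (O : Set (Agt → Set Loc)) : Set Loc :=
  ⋃ s ∈ O, ⋃ l ∈ s i, G.obs i l

/-- The translated objective `R^K = {s ∈ S : ∃ i, ∃ o ∈ R ∩ Obs_i, s i ⊆ o}`,
as a set of joint knowledge states. -/
def transObj (G : MAGIIAN Agt Loc Act) (R : Set (Set Loc)) : Set (Agt → Set Loc) :=
  {s | ∃ i, ∃ o ∈ R, G.IsObs i o ∧ s i ⊆ o}

end MAGIIAN

namespace MAGIIAN

variable {Agt Loc : Type} {Act : Agt → Type}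

/-- `ExpLoc Agt Loc j` is the type of locations of the `j`-iterated MKBSC
expansion `G^{jK}` (also the type `B^(j)` of the knowledge hierarchy). -/
def ExpLoc (Agt Loc : Type) : ℕ → Type
  | 0 => Loc
  | j + 1 => Agt → Set (ExpLoc Agt Loc j)

/-- The `j`-iterated MKBSC expansion `G^{jK}` (`G^{0K} = G`). -/
def iterExpand (G : MAGIIAN Agt Loc Act) : (j : ℕ) → MAGIIAN Agt (ExpLoc Agt Loc j) Act
  | 0 => G
  | j + 1 => (iterExpand G j).expand

/-- Flattening `ŝ` of a knowledge state `s` of `(G^{jK}|_i)^K` (a set of locations of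
`G^{jK}`) to a set of locations of `G`, obtained by repeatedly taking the (common)
`i`-th component. -/
def hatSet (i : Agt) : (j : ℕ) → Set (ExpLoc Agt Loc j) → Set Loc
  | 0, s => s
  | j + 1, s => hatSet i j (⋃ t ∈ s, t i)

/-- Iterated intersection `⩀s` of a joint knowledge state of `G^{jK}`,
yielding a set of locations of `G`. -/
def capAll : (j : ℕ) → ExpLoc Agt Loc j → Set Loc
  | 0, l => {l}
  | j + 1, s => ⋃ t ∈ (⋂ i, s i), capAll j t

/-- A possible observation profile of `G`. -/
def possibleProfile (G : MAGIIAN Agt Loc Act) (o : Agt → Set Loc) : Prop :=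
  (∀ i, G.IsObs i (o i)) ∧ (⋂ i, o i).Nonempty

/-- Generalised knowledge update: `gdelta G j` is `δ^{j+1}` (so `gdelta G 0 = δ`),
acting on `A^{(j+1)} = Set (ExpLoc Agt Loc j)`; inconsistent tuples are pruned out. -/
def gdelta (G : MAGIIAN Agt Loc Act) :
    (j : ℕ) → (i : Agt) → Set (ExpLoc Agt Loc j) → Act i → Set Loc → Set (ExpLoc Agt Loc j)
  | 0, i, s, a, o => {l' ∈ o | ∃ σ : ∀ j', Act j', σ i = a ∧ ∃ l ∈ s, G.trans l σ l'}
  | j + 1, i, s, a, o =>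
      {t' | (⋂ i', t' i').Nonempty ∧
        ∃ t ∈ s, ∃ σ : ∀ j', Act j', ∃ ob : Agt → Set Loc,
          G.possibleProfile ob ∧ σ i = a ∧ ob i = o ∧
          t' = fun i' => gdelta G j i' (t i') (σ i') (ob i')}

/-- Translation of an observable objective of `H` (a set of observation blocks)
to an observable objective of `H^K`. -/
def trObj {L : Type} (H : MAGIIAN Agt L Act) (R : Set (Set L)) :
    Set (Set (Agt → Set L)) :=
  {O | ∃ (i : Agt) (A : Set L), O = {s | s i = A} ∧ ∃ o ∈ R, H.IsObs i o ∧ A ⊆ o}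

/-- The `j`-iterated translation `R^{jK}` of an observable objective `R` of `G`. -/
def iterObj (G : MAGIIAN Agt Loc Act) (R : Set (Set Loc)) :
    (j : ℕ) → Set (Set (ExpLoc Agt Loc j))
  | 0 => R
  | j + 1 => trObj (iterExpand G j) (iterObj G R j)

/-- Outcomes in `G` of a profile of generalised induced transducers
`{A_i(α_i)}`, for a profile `α` of memoryless strategies on the knowledge states of
`(G^{mK}|_i)^K` (i.e. of observation-based memoryless strategies in `G^{(m+1)K}`):
each agent `i` starts with memory `{init of G^{mK}}`, plays `α i` on its current memory
state, and updates its memory to the unique `Δ^{(m+1)K}_i`-successor that is consistent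
with its new observation. -/
def gTransducerOutcome (G : MAGIIAN Agt Loc Act) (m : ℕ)
    (α : ∀ i, Set (ExpLoc Agt Loc m) → Act i) (l : ℕ → Loc) : Prop :=
  l 0 = G.init ∧ ∃ σ : ℕ → ∀ i, Act i, ∃ mem : (i : Agt) → ℕ → Set (ExpLoc Agt Loc m),
    (∀ i, mem i 0 = {(iterExpand G m).init}) ∧
    (∀ k, G.trans (l k) (σ k) (l (k + 1))) ∧
    (∀ k i, σ k i = α i (mem i k)) ∧
    (∀ k i, (iterExpand G m).kTrans i (mem i k) (σ k i) (mem i (k + 1)) ∧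
      hatSet i m (mem i (k + 1)) ⊆ G.obs i (l (k + 1)))

/-- Outcomes in `G^{(m+1)K}` of a profile of observation-based memoryless strategies
(each agent's action depending only on the `i`-th component of the current joint
knowledge state). -/
def gKMLOutcome (G : MAGIIAN Agt Loc Act) (m : ℕ)
    (α : ∀ i, Set (ExpLoc Agt Loc m) → Act i) (s : ℕ → ExpLoc Agt Loc (m + 1)) : Prop :=
  ∃ σ : ℕ → ∀ i, Act i, s 0 = (iterExpand G (m + 1)).init ∧
    (∀ k, (iterExpand G (m + 1)).trans (s k) (σ k) (s (k + 1))) ∧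
    (∀ k i, σ k i = α i (s k i))

/-- Outcomes in `G` of a profile of `(m+1)`-order knowledge-based strategies based on
`α` and the generalised knowledge update `δ^{m+1} = gdelta G m`. -/
def gKBOutcome (G : MAGIIAN Agt Loc Act) (m : ℕ)
    (α : ∀ i, Set (ExpLoc Agt Loc m) → Act i) (l : ℕ → Loc) : Prop :=
  l 0 = G.init ∧ ∃ σ : ℕ → ∀ i, Act i, ∃ mem : (i : Agt) → ℕ → Set (ExpLoc Agt Loc m),
    (∀ i, mem i 0 = {(iterExpand G m).init}) ∧
    (∀ k, G.trans (l k) (σ k) (l (k + 1))) ∧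
    (∀ k i, σ k i = α i (mem i k)) ∧
    (∀ k i, mem i (k + 1) = gdelta G m i (mem i k) (σ k i) (G.obs i (l (k + 1))) ∧
      (mem i (k + 1)).Nonempty)

end MAGIIAN

section AUX
namespace MAGIIAN

variable {Agt Loc : Type} {Act : Agt → Type}

lemma hatSet_mono (i : Agt) : ∀ (j : ℕ) (A B : Set (ExpLoc Agt Loc j)), A ⊆ B →
    hatSet i j A ⊆ hatSet i j B
  | 0, A, B, h => h
  | j + 1, A, B, h => hatSet_mono i j _ _ (by
      intro x hx
      simp only [Set.mem_iUnion] at hx ⊢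
      obtain ⟨t, ht, hx⟩ := hx
      exact ⟨t, h ht, hx⟩)

lemma expand_PDK' {L : Type} (H : MAGIIAN Agt L Act) : H.expand.PDK := by
  intro S hS
  induction hS with
  | refl =>
      refine ⟨H.expand.init, ?_⟩
      ext u
      simp only [Set.mem_iInter, Set.mem_singleton_iff]
      constructor
      · intro hu; funext i; exact congrFun (hu i) i
      · rintro rfl i; rfl
  | tail hreach hstep ih =>
      obtain ⟨σ, h1, l, hl, l', hl', htr⟩ := hstep
      refine ⟨l', ?_⟩
      ext u
      simp only [Set.mem_iInter, Set.mem_singleton_iff]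
      constructor
      · intro hu
        funext i
        obtain ⟨o, ⟨w, rfl⟩, hEq, hne⟩ := h1 i
        have h1' : u i = w i := by
          have := hu i
          rw [hEq] at this
          exact this.1
        have h2' : l' i = w i := by
          have := Set.mem_iInter.mp hl' i
          rw [hEq] at this
          exact this.1
        rw [h1', h2']
      · rintro rfl
        exact Set.mem_iInter.mp hl'

lemma unfold_play {L : Type} (H : MAGIIAN Agt L Act) (hP : H.PDK)
    (s : ℕ → (Agt → Set L)) (σ : ℕ → ∀ i, Act i)
    (h0 : s 0 = H.expand.init)
    (hstep : ∀ k, H.expand.trans (s k) (σ k) (s (k + 1))) :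
    ∃ t : ℕ → L, t 0 = H.init ∧ (∀ k, H.trans (t k) (σ k) (t (k + 1))) ∧
      (∀ i k, s k i ⊆ H.obs i (t k)) := by
  have hreach : ∀ k, H.expand.Reachable (s k) := by
    intro k
    induction k with
    | zero => rw [h0]; exact Relation.ReflTransGen.refl
    | succ k ih => exact Relation.ReflTransGen.tail ih ⟨σ k, hstep k⟩
  choose t ht using fun k => hP (s k) (hreach k)
  have hmem : ∀ k i, t k ∈ s k i := by
    intro k i
    have h : t k ∈ ⋂ i, s k i := by rw [ht k]; exact Set.mem_singleton _
    exact Set.mem_iInter.mp h i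
  have ht0 : t 0 = H.init := by
    have h : H.init ∈ ⋂ i, s 0 i := by
      rw [h0]
      exact Set.mem_iInter.mpr fun i => Set.mem_singleton _
    rw [ht 0] at h
    exact h.symm
  refine ⟨t, ht0, ?_, ?_⟩
  · intro k
    obtain ⟨h1, l, hl, l', hl', htr⟩ := hstep k
    rw [ht k] at hl
    rw [ht (k + 1)] at hl'
    rw [Set.mem_singleton_iff] at hl hl'
    rwa [hl, hl'] at htr
  · intro i k
    cases k with
    | zero =>
        intro u hu
        have : s 0 i = {H.init} := by rw [h0]; rfl
        rw [this, Set.mem_singleton_iff] at hu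
        rw [hu, ← ht0]
        exact H.obs_mem i (t 0)
    | succ k =>
        obtain ⟨h1, _⟩ := hstep k
        obtain ⟨o, ⟨w, rfl⟩, hEq, hne⟩ := h1 i
        have hobs : H.obs i (t (k + 1)) = H.obs i w := by
          apply H.obs_eq
          have := hmem (k + 1) i
          rw [hEq] at this
          exact this.1
        rw [hobs]
        intro u hu
        rw [hEq] at hu
        exact hu.1

lemma flatten (G : MAGIIAN Agt Loc Act) (hPDK : G.PDK) (R : Set (Set Loc)) :
    ∀ (m : ℕ) (s : ℕ → ExpLoc Agt Loc (m + 1)) (σ : ℕ → ∀ i, Act i),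
      s 0 = (iterExpand G (m + 1)).init →
      (∀ k, (iterExpand G (m + 1)).trans (s k) (σ k) (s (k + 1))) →
      ∃ l : ℕ → Loc, l 0 = G.init ∧ (∀ k, G.trans (l k) (σ k) (l (k + 1))) ∧
        (∀ i k, hatSet i m (s k i) ⊆ G.obs i (l k)) ∧
        (∀ i k, G.obs i (l k) ∈ R →
          (iterExpand G (m + 1)).obs i (s k) ∈ iterObj G R (m + 1)) := by
  intro m
  induction m with
  | zero =>
      intro s σ h0 hstep
      obtain ⟨t, ht0, httr, htsub⟩ := unfold_play G hPDK s σ h0 hstep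
      refine ⟨t, ht0, httr, fun i k => htsub i k, ?_⟩
      intro i k hR
      exact ⟨i, s k i, rfl, G.obs i (t k), hR, ⟨t k, rfl⟩, htsub i k⟩
  | succ m ih =>
      intro s σ h0 hstep
      obtain ⟨t, ht0, httr, htsub⟩ :=
        unfold_play (iterExpand G (m + 1)) (expand_PDK' (iterExpand G m)) s σ h0 hstep
      obtain ⟨l, hl0, hltr, hlhat, hlwin⟩ := ih t σ ht0 httr
      refine ⟨l, hl0, hltr, ?_, ?_⟩
      · intro i k
        have hsub : (⋃ u ∈ s k i, u i) ⊆ t k i := by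
          intro x hx
          simp only [Set.mem_iUnion] at hx
          obtain ⟨u, hu, hx⟩ := hx
          have heq : u i = t k i := htsub i k hu
          rwa [heq] at hx
        exact (hatSet_mono i m _ _ hsub).trans (hlhat i k)
      · intro i k hR
        exact ⟨i, s k i, rfl, (iterExpand G (m + 1)).obs i (t k), hlwin i k hR,
          ⟨t k, rfl⟩, fun u hu => htsub i k hu⟩

end MAGIIAN
end AUX



namespace MAGIIAN

variable {Agt Loc : Type} {Act : Agt → Type}

/-- Generalised Strategy Correspondence, part (i), for `j = m + 1 ≥ 1`:
if the profile of generalised induced transducers `{A_i(α^{jK}_i)}` is winning for the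
observable reachability objective `R` in `G` and `G^K` fulfills the PDK condition,
then `{α^{jK}_i}` is winning for the `j`-iterated translation `R^{jK}` in `G^{jK}`. -/
theorem generalised_strategy_correspondence_i (G : MAGIIAN Agt Loc Act) (m : ℕ)
    (R : Set (Set Loc)) (hR : ∀ o ∈ R, ∃ i, G.IsObs i o)
    (α : ∀ i, Set (ExpLoc Agt Loc m) → Act i)
    (hwin : ∀ l, gTransducerOutcome G m α l → G.WinsReach R l)
    (hPDK : G.PDK) :
    ∀ s : ℕ → ExpLoc Agt Loc (m + 1), gKMLOutcome G m α s →
      (iterExpand G (m + 1)).WinsReach (iterObj G R (m + 1)) s := by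
  intro s hout
  obtain ⟨σ, h0, hstep, hσ⟩ := hout
  obtain ⟨l, hl0, hltr, hlhat, hlwin⟩ := flatten G hPDK R m s σ h0 hstep
  have htd : gTransducerOutcome G m α l := by
    refine ⟨hl0, σ, fun i k => s k i, ?_, hltr, fun k i => hσ k i, ?_⟩
    · intro i
      show s 0 i = _
      rw [h0]
      rfl
    · intro k i
      exact ⟨(hstep k).1 i, hlhat i (k + 1)⟩
  obtain ⟨i, k, hmem⟩ := hwin l htd
  exact ⟨i, k, hlwin i k hmem⟩

end MAGIIAN
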